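/- Let X and Y be nonempty finite sets and let (U_s)_{s∈X∪Y} be i.i.d. random variables uniform on [0,1]. Define Z(X) = min_{x∈X} U_x and Z(Y) = min_{y∈Y} U_y. Then the probability that Z(X) = Z(Y) equals the Jaccard coefficient |X ∩ Y| / |X ∪ Y|. -/

import Mathlib

open MeasureTheory ProbabilityTheory
open scoped ENNReal

lemma nu_prob : IsProbabilityMeasure (volume.restrict (Set.Icc (0:ℝ) 1)) := by
  constructor
  rw [Measure.restrict_apply_univ, Real.volume_Icc]
  norm_num

lemma minB_measurable {κ : Type*} [Fintype κ] (i : κ) :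
    MeasurableSet {f : κ → ℝ | ∀ j, j ≠ i → f i < f j} := by
  have : {f : κ → ℝ | ∀ j, j ≠ i → f i < f j}
      = ⋂ j, ⋂ _ : j ≠ i, {f : κ → ℝ | f i < f j} := by
    ext f; simp
  rw [this]
  exact MeasurableSet.iInter fun j => MeasurableSet.iInter fun _ =>
    measurableSet_lt (measurable_pi_apply i) (measurable_pi_apply j)

lemma pi_min_eq {κ : Type*} [Fintype κ] [DecidableEq κ] (ν : Measure ℝ)
    [IsProbabilityMeasure ν] (i i' : κ) :
    Measure.pi (fun _ : κ => ν) {f | ∀ j, j ≠ i → f i < f j} =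
    Measure.pi (fun _ : κ => ν) {f | ∀ j, j ≠ i' → f i' < f j} := by
  set e := Equiv.swap i i' with he
  have mp : MeasurePreserving (MeasurableEquiv.piCongrLeft (fun _ : κ => ℝ) e)
      (Measure.pi fun _ : κ => ν) (Measure.pi fun _ : κ => ν) :=
    measurePreserving_piCongrLeft (fun _ : κ => ν) e
  have happ : ∀ (f : κ → ℝ) (b : κ),
      (MeasurableEquiv.piCongrLeft (fun _ : κ => ℝ) e) f b = f (e.symm b) := by
    intro f b
    rw [MeasurableEquiv.coe_piCongrLeft]
    have := Equiv.piCongrLeft_apply_apply (fun _ : κ => ℝ) e f (e.symm b)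
    simpa using this
  have hpre : (MeasurableEquiv.piCongrLeft (fun _ : κ => ℝ) e) ⁻¹'
      {f | ∀ j, j ≠ i' → f i' < f j} = {f | ∀ j, j ≠ i → f i < f j} := by
    ext f
    simp only [Set.mem_preimage, Set.mem_setOf_eq, happ]
    have hsymm : e.symm i' = i := by simp [he, Equiv.symm_swap, Equiv.swap_apply_right]
    rw [hsymm]
    constructor
    · intro h k hk
      have h1 : e k ≠ i' := fun hc => hk (by rw [← hsymm, ← hc, Equiv.symm_apply_apply])
      have := h (e k) h1
      rwa [Equiv.symm_apply_apply] at this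
    · intro h j hj
      refine h _ (fun hc => hj ?_)
      rw [← Equiv.apply_symm_apply e j, hc]
      simp [he, Equiv.swap_apply_left]
  calc (Measure.pi fun _ : κ => ν) {f | ∀ j, j ≠ i → f i < f j}
      = (Measure.pi fun _ : κ => ν) ((MeasurableEquiv.piCongrLeft (fun _ : κ => ℝ) e) ⁻¹'
          {f | ∀ j, j ≠ i' → f i' < f j}) := by rw [hpre]
    _ = (Measure.pi fun _ : κ => ν) {f | ∀ j, j ≠ i' → f i' < f j} :=
        mp.measure_preimage (minB_measurable i').nullMeasurableSet

lemma tie_null {Ω ι : Type*} [MeasurableSpace Ω] (μ : Measure Ω) [IsProbabilityMeasure μ]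
    (U : ι → Ω → ℝ) (hmeas : ∀ i, Measurable (U i))
    (hunif : ∀ i, Measure.map (U i) μ = volume.restrict (Set.Icc (0:ℝ) 1))
    (hindep : iIndepFun U μ)
    {i j : ι} (hij : i ≠ j) : μ {ω | U i ω = U j ω} = 0 := by
  haveI := nu_prob
  have hpair : IndepFun (U i) (U j) μ := hindep.indepFun hij
  have hmap : μ.map (fun ω => (U i ω, U j ω))
      = (volume.restrict (Set.Icc (0:ℝ) 1)).prod (volume.restrict (Set.Icc (0:ℝ) 1)) := by
    rw [(indepFun_iff_map_prod_eq_prod_map_map (hmeas i).aemeasurable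
      (hmeas j).aemeasurable).mp hpair, hunif i, hunif j]
  have hdiag : MeasurableSet {p : ℝ × ℝ | p.1 = p.2} :=
    measurableSet_eq_fun measurable_fst measurable_snd
  have hset : {ω | U i ω = U j ω} = (fun ω => (U i ω, U j ω)) ⁻¹' {p : ℝ × ℝ | p.1 = p.2} := rfl
  rw [hset, ← Measure.map_apply ((hmeas i).prodMk (hmeas j)) hdiag, hmap,
    Measure.prod_apply hdiag]
  have hfib : ∀ x : ℝ, (Prod.mk x ⁻¹' {p : ℝ × ℝ | p.1 = p.2}) = {x} := by
    intro x; ext y; simp [eq_comm]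
  simp [hfib]

lemma map_tuple_eq_pi {Ω ι : Type*} [MeasurableSpace Ω] (μ : Measure Ω)
    [IsProbabilityMeasure μ] (S : Finset ι) (U : ι → Ω → ℝ)
    (hmeas : ∀ i, Measurable (U i))
    (hunif : ∀ i, Measure.map (U i) μ = volume.restrict (Set.Icc (0:ℝ) 1))
    (hindep : iIndepFun U μ) :
    Measure.map (fun ω (i : ↥S) => U (↑i) ω) μ
      = Measure.pi (fun _ : ↥S => volume.restrict (Set.Icc (0:ℝ) 1)) := by
  classical
  haveI := nu_prob
  refine (Measure.pi_eq fun s hs => ?_).symm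
  set sets : ι → Set ℝ := fun i => if h : i ∈ S then s ⟨i, h⟩ else Set.univ with hsets_def
  have hsets : ∀ i ∈ S, MeasurableSet (sets i) := by
    intro i hi
    simp only [hsets_def, dif_pos hi]
    exact hs ⟨i, hi⟩
  have hmt : Measurable (fun ω (i : ↥S) => U (↑i) ω) :=
    measurable_pi_lambda _ fun i => hmeas i
  rw [Measure.map_apply hmt (MeasurableSet.univ_pi hs)]
  have hpre : (fun ω (i : ↥S) => U (↑i) ω) ⁻¹' Set.pi Set.univ s
      = ⋂ i ∈ S, U i ⁻¹' sets i := by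
    ext ω
    simp only [Set.mem_preimage, Set.mem_pi, Set.mem_univ, forall_true_left, Set.mem_iInter]
    constructor
    · intro h i hi
      simpa [hsets_def, dif_pos hi] using h ⟨i, hi⟩
    · intro h i
      have := h ↑i i.2
      simpa [hsets_def, dif_pos i.2] using this
  rw [hpre, hindep.measure_inter_preimage_eq_mul S hsets]
  have hterm : ∀ i ∈ S, μ (U i ⁻¹' sets i) = (volume.restrict (Set.Icc (0:ℝ) 1)) (sets i) := by
    intro i hi
    rw [← hunif i, Measure.map_apply (hmeas i) (hsets i hi)]
  rw [Finset.prod_congr rfl hterm]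
  rw [Finset.univ_eq_attach, ← Finset.prod_attach S
    (fun i => (volume.restrict (Set.Icc (0:ℝ) 1)) (sets i))]
  refine Finset.prod_congr rfl fun j _ => ?_
  congr 1
  simp [hsets_def, dif_pos j.2]


/-- **Min-hash collision property with i.i.d. uniform hashes.**
Let `X`, `Y` be nonempty finite sets and `(U s)` i.i.d. uniform random variables on `[0,1]`.
With `Z(X) = min_{x ∈ X} U x`, the probability that `Z(X) = Z(Y)` equals the Jaccard
coefficient `|X ∩ Y| / |X ∪ Y|`. -/
theorem minhash_collision_uniform
    {Ω : Type*} [MeasurableSpace Ω] (μ : Measure Ω) [IsProbabilityMeasure μ]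
    {ι : Type*} [DecidableEq ι] (X Y : Finset ι) (hX : X.Nonempty) (hY : Y.Nonempty)
    (U : ι → Ω → ℝ)
    (hmeas : ∀ i, Measurable (U i))
    (hunif : ∀ i, Measure.map (U i) μ = volume.restrict (Set.Icc (0 : ℝ) 1))
    (hindep : iIndepFun U μ) :
    μ {ω | X.inf' hX (fun x => U x ω) = Y.inf' hY (fun y => U y ω)} =
      ENNReal.ofReal (((X ∩ Y).card : ℝ) / ((X ∪ Y).card : ℝ)) := by
  classical
  haveI := nu_prob
  set ν := volume.restrict (Set.Icc (0:ℝ) 1) with hν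
  set E := {ω | X.inf' hX (fun x => U x ω) = Y.inf' hY (fun y => U y ω)} with hE
  set S := X ∪ Y with hS
  set T : Ω → (↥S → ℝ) := fun ω i => U (↑i) ω with hT
  have hlaw : Measure.map T μ = Measure.pi (fun _ : ↥S => ν) :=
    map_tuple_eq_pi μ S U hmeas hunif hindep
  set B : ↥S → Set (↥S → ℝ) := fun i => {f | ∀ j, j ≠ i → f i < f j} with hB
  set A : ↥S → Set Ω := fun i => T ⁻¹' (B i) with hA
  have hmt : Measurable T := measurable_pi_lambda _ fun i => hmeas _
  have hAmeas : ∀ i, MeasurableSet (A i) := fun i => hmt (minB_measurable i)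
  have hAval : ∀ i, μ (A i) = Measure.pi (fun _ : ↥S => ν) (B i) := fun i => by
    rw [hA, ← Measure.map_apply hmt (minB_measurable i), hlaw]
  have hconst : ∀ i i' : ↥S, μ (A i) = μ (A i') := fun i i' => by
    rw [hAval, hAval]; exact pi_min_eq ν i i'
  have hAmem : ∀ (i : ↥S) (ω : Ω), ω ∈ A i ↔ ∀ j : ↥S, j ≠ i → U ↑i ω < U ↑j ω :=
    fun i ω => Iff.rfl
  set N : Set Ω := ⋃ (i : ↥S) (j : ↥S) (_ : i ≠ j), {ω | U ↑i ω = U ↑j ω} with hNdef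
  have hN : μ N = 0 :=
    measure_iUnion_null fun i => measure_iUnion_null fun j => measure_iUnion_null fun hij =>
      tie_null μ U hmeas hunif hindep (fun hc => hij (Subtype.ext hc))
  have hSne : S.Nonempty := ⟨hX.choose, Finset.mem_union_left _ hX.choose_spec⟩
  have hcover : ∀ ω, ω ∉ N → ∃ i, ω ∈ A i := by
    intro ω hω
    obtain ⟨a, ha, hmin⟩ := S.exists_min_image (fun i => U i ω) hSne
    refine ⟨⟨a, ha⟩, ?_⟩
    intro j hj
    have hle : U a ω ≤ U ↑j ω := hmin ↑j j.2
    rcases lt_or_eq_of_le hle with h | h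
    · exact h
    · exact absurd (Set.mem_iUnion.2 ⟨⟨a, ha⟩, Set.mem_iUnion.2
        ⟨j, Set.mem_iUnion.2 ⟨Ne.symm hj, h⟩⟩⟩) hω
  have hdisj : Pairwise (Function.onFun Disjoint A) := by
    intro i i' hii'
    refine Set.disjoint_left.2 fun ω h1 h2 => ?_
    exact lt_asymm ((hAmem i ω).1 h1 i' (Ne.symm hii')) ((hAmem i' ω).1 h2 i hii')
  have hsum1 : ∑ i : ↥S, μ (A i) = 1 := by
    have hUAN : (Set.univ : Set Ω) ⊆ (⋃ i, A i) ∪ N := by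
      intro ω _
      by_cases h : ω ∈ N
      · exact Or.inr h
      · exact Or.inl (Set.mem_iUnion.2 (hcover ω h))
    have h1 : (1:ℝ≥0∞) ≤ μ (⋃ i, A i) := by
      calc (1:ℝ≥0∞) = μ Set.univ := measure_univ.symm
        _ ≤ μ ((⋃ i, A i) ∪ N) := measure_mono hUAN
        _ ≤ μ (⋃ i, A i) + μ N := measure_union_le _ _
        _ = μ (⋃ i, A i) := by rw [hN, add_zero]
    have h2 : μ (⋃ i, A i) ≤ 1 := prob_le_one
    have huA : μ (⋃ i, A i) = 1 := le_antisymm h2 h1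
    rw [measure_iUnion hdisj hAmeas, tsum_fintype] at huA
    exact huA
  have key : ∀ (Z : Finset ι) (hZ : Z.Nonempty), Z ⊆ S → ∀ (i : ↥S) (ω : Ω), ω ∈ A i →
      ↑i ∈ Z → Z.inf' hZ (fun x => U x ω) = U ↑i ω := by
    intro Z hZ hZS i ω hω hiZ
    refine le_antisymm (Finset.inf'_le _ hiZ) (Finset.le_inf' _ _ fun x hx => ?_)
    by_cases hxi : x = ↑i
    · rw [hxi]
    · exact ((hAmem i ω).1 hω ⟨x, hZS hx⟩ (fun hc => hxi (congrArg Subtype.val hc))).le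
  have key2 : ∀ (Z : Finset ι) (hZ : Z.Nonempty), Z ⊆ S → ∀ (i : ↥S) (ω : Ω), ω ∈ A i →
      ↑i ∉ Z → U ↑i ω < Z.inf' hZ (fun x => U x ω) := by
    intro Z hZ hZS i ω hω hiZ
    obtain ⟨y, hy, hyeq⟩ := Finset.exists_mem_eq_inf' hZ (fun x => U x ω)
    rw [hyeq]
    refine (hAmem i ω).1 hω ⟨y, hZS hy⟩ (fun hc => hiZ ?_)
    have : y = (↑i : ι) := congrArg Subtype.val hc
    rwa [this] at hy
  set P : Finset ↥S := Finset.univ.filter (fun i => ↑i ∈ X ∩ Y) with hP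
  have hEsub : E ⊆ (⋃ i ∈ P, A i) ∪ N := by
    intro ω hωE
    by_cases hn : ω ∈ N
    · exact Or.inr hn
    obtain ⟨i, hi⟩ := hcover ω hn
    left
    have hωE' : X.inf' hX (fun x => U x ω) = Y.inf' hY (fun y => U y ω) := hωE
    by_cases hx : (↑i : ι) ∈ X <;> by_cases hy : (↑i : ι) ∈ Y
    · exact Set.mem_biUnion (Finset.mem_filter.2 ⟨Finset.mem_univ _,
        Finset.mem_inter.2 ⟨hx, hy⟩⟩) hi
    · exfalso
      have h1 := key X hX Finset.subset_union_left i ω hi hx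
      have h2 := key2 Y hY Finset.subset_union_right i ω hi hy
      rw [← hωE', h1] at h2
      exact lt_irrefl _ h2
    · exfalso
      have h1 := key Y hY Finset.subset_union_right i ω hi hy
      have h2 := key2 X hX Finset.subset_union_left i ω hi hx
      rw [hωE', h1] at h2
      exact lt_irrefl _ h2
    · exact absurd (Finset.mem_union.1 i.2) (by simp [hx, hy])
  have hsubE : (⋃ i ∈ P, A i) ⊆ E := by
    intro ω hω
    rw [Set.mem_iUnion₂] at hω
    obtain ⟨i, hiP, hωA⟩ := hω
    have hiXY := (Finset.mem_filter.1 hiP).2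
    have hx := (Finset.mem_inter.1 hiXY).1
    have hy := (Finset.mem_inter.1 hiXY).2
    show X.inf' hX (fun x => U x ω) = Y.inf' hY (fun y => U y ω)
    rw [key X hX Finset.subset_union_left i ω hωA hx,
      key Y hY Finset.subset_union_right i ω hωA hy]
  have hEval : μ E = ∑ i ∈ P, μ (A i) := by
    have hle1 : μ E ≤ μ (⋃ i ∈ P, A i) := by
      calc μ E ≤ μ ((⋃ i ∈ P, A i) ∪ N) := measure_mono hEsub
        _ ≤ μ (⋃ i ∈ P, A i) + μ N := measure_union_le _ _
        _ = μ (⋃ i ∈ P, A i) := by rw [hN, add_zero]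
    have hEeq : μ E = μ (⋃ i ∈ P, A i) := le_antisymm hle1 (measure_mono hsubE)
    rw [hEeq, measure_biUnion_finset (fun i _ j _ hij => hdisj hij) (fun i _ => hAmeas i)]
  obtain ⟨a0, ha0⟩ := hSne
  set c := μ (A ⟨a0, ha0⟩) with hc0
  have hAc : ∀ i, μ (A i) = c := fun i => hconst i ⟨a0, ha0⟩
  have hn0 : (S.card : ℝ≥0∞) ≠ 0 := by
    simp [Finset.card_ne_zero_of_mem ha0]
  have hnc : (S.card : ℝ≥0∞) * c = 1 := by
    calc (S.card : ℝ≥0∞) * c = ∑ _i : ↥S, c := by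
          rw [Finset.sum_const, Finset.card_univ, Fintype.card_coe, nsmul_eq_mul]
      _ = ∑ i : ↥S, μ (A i) := Finset.sum_congr rfl fun i _ => (hAc i).symm
      _ = 1 := hsum1
  have hcval : c = (S.card : ℝ≥0∞)⁻¹ := by
    calc c = (S.card : ℝ≥0∞)⁻¹ * ((S.card : ℝ≥0∞) * c) := by
          rw [← mul_assoc, ENNReal.inv_mul_cancel hn0 (by simp), one_mul]
      _ = (S.card : ℝ≥0∞)⁻¹ := by rw [hnc, mul_one]
  have hPcard : P.card = (X ∩ Y).card := by
    refine Finset.card_bij (fun i _ => (↑i : ι)) ?_ ?_ ?_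
    · intro i hi; exact (Finset.mem_filter.1 hi).2
    · intro i _ j _ h; exact Subtype.ext h
    · intro b hb
      exact ⟨⟨b, Finset.mem_union_left _ (Finset.mem_inter.1 hb).1⟩,
        Finset.mem_filter.2 ⟨Finset.mem_univ _, hb⟩, rfl⟩
  have hμE : μ E = ((X ∩ Y).card : ℝ≥0∞) * (S.card : ℝ≥0∞)⁻¹ := by
    rw [hEval]
    calc ∑ i ∈ P, μ (A i) = ∑ _i ∈ P, c := Finset.sum_congr rfl fun i _ => hAc i
      _ = P.card • c := Finset.sum_const c 
      _ = ((X ∩ Y).card : ℝ≥0∞) * (S.card : ℝ≥0∞)⁻¹ := by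
          rw [hPcard, nsmul_eq_mul, hcval]
  rw [hμE]
  have hnpos : (0:ℝ) < (S.card : ℝ) := by
    exact_mod_cast Nat.pos_of_ne_zero (by exact_mod_cast fun h => hn0 (by exact_mod_cast h))
  rw [ENNReal.ofReal_div_of_pos hnpos, ENNReal.ofReal_natCast, ENNReal.ofReal_natCast,
    div_eq_mul_inv]
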